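/- In the braid group B_{2n} (n ≥ 2), with p_i = σ_{2i} σ_{2i−1} σ_{2i+1}^{-1} σ_{2i}^{-1}, s_i = σ_{2i} σ_{2i−1} σ_{2i+1} σ_{2i} and t_i = σ_{2i−1}, the relation p_i t_i s_i p_i = s_i t_i holds for each 1 ≤ i < n. -/

import Mathlib

/-- The braid relations on `m` generators `σ_1, …, σ_m` (indexed by `Fin m`):
`σᵢσⱼ = σⱼσᵢ` for `|i−j| > 1` and `σᵢσⱼσᵢ = σⱼσᵢσⱼ` for `|i−j| = 1`. -/
def braidRels (m : ℕ) : Set (FreeGroup (Fin m)) :=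
  { w | (∃ i j : Fin m, (i : ℕ) + 1 < (j : ℕ) ∧
          w = FreeGroup.of i * FreeGroup.of j * (FreeGroup.of i)⁻¹ * (FreeGroup.of j)⁻¹) ∨
        (∃ i j : Fin m, (i : ℕ) + 1 = (j : ℕ) ∧
          w = FreeGroup.of i * FreeGroup.of j * FreeGroup.of i *
              (FreeGroup.of j * FreeGroup.of i * FreeGroup.of j)⁻¹) }

/-- The braid group on `m + 1` strands, with generators `σ_1, …, σ_m`. -/
def BraidGroup (m : ℕ) : Type := PresentedGroup (braidRels m)

instance (m : ℕ) : Group (BraidGroup m) :=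
  inferInstanceAs (Group (PresentedGroup (braidRels m)))

/-- The standard Artin generator `σ_k` (for `1 ≤ k ≤ m`). -/
def bσ {m : ℕ} (k : ℕ) : BraidGroup m :=
  if h : k - 1 < m then PresentedGroup.of (⟨k - 1, h⟩ : Fin m) else 1

/-- `sᵢ = σ_{2i} σ_{2i−1} σ_{2i+1} σ_{2i}`. -/
def bs {m : ℕ} (i : ℕ) : BraidGroup m := bσ (2*i) * bσ (2*i - 1) * bσ (2*i + 1) * bσ (2*i)

/-- `tᵢ = σ_{2i−1}`. -/
def bt {m : ℕ} (i : ℕ) : BraidGroup m := bσ (2*i - 1)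

/-- `pᵢ = σ_{2i} σ_{2i−1} σ_{2i+1}⁻¹ σ_{2i}⁻¹`. -/
def bp {m : ℕ} (i : ℕ) : BraidGroup m := bσ (2*i) * bσ (2*i - 1) * (bσ (2*i + 1))⁻¹ * (bσ (2*i))⁻¹

/-- `r₁ = σ₂ σ₁ σ₃⁻¹ σ₂⁻¹`. -/
def br1 {m : ℕ} : BraidGroup m := bσ 2 * bσ 1 * (bσ 3)⁻¹ * (bσ 2)⁻¹

/-- `r₂ = σ₄ σ₃ σ₂ σ₁ σ₅⁻¹ σ₄⁻¹ σ₃⁻¹ σ₂⁻¹`. -/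
def br2 {m : ℕ} : BraidGroup m :=
  bσ 4 * bσ 3 * bσ 2 * bσ 1 * (bσ 5)⁻¹ * (bσ 4)⁻¹ * (bσ 3)⁻¹ * (bσ 2)⁻¹

lemma rel_one {α : Type*} {rels : Set (FreeGroup α)} {r : FreeGroup α} (h : r ∈ rels) :
    PresentedGroup.mk rels r = 1 :=
  (QuotientGroup.eq_one_iff r).mpr (Subgroup.subset_normalClosure h)

lemma key {G : Type*} [Group G] (a b c : G)
    (h1 : a*b*a = b*a*b) (h2 : b*c*b = c*b*c) (h3 : a*c = c*a) :
    (b*a*c⁻¹*b⁻¹)*a*(b*a*c*b)*(b*a*c⁻¹*b⁻¹) = (b*a*c*b)*a := by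
  have d1 : b⁻¹*(a*(b*a)) = a*b := by
    rw [show b⁻¹*(a*(b*a)) = b⁻¹*(a*b*a) by group, h1]; group
  have d2 : c⁻¹*a = a*c⁻¹ := by
    rw [show c⁻¹*a = c⁻¹*(a*c)*c⁻¹ by group, h3]; group
  have d3 : c⁻¹*(b*(c*b)) = b*c := by
    rw [show c⁻¹*(b*(c*b)) = c⁻¹*(b*c*b) by group, h2]; group
  have d4 : c*(b*c⁻¹) = b⁻¹*(c*b) := by
    rw [eq_inv_mul_iff_mul_eq, show b*(c*(b*c⁻¹)) = (b*c*b)*c⁻¹ by group, h2]; group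
  have d5 : b*(a*b⁻¹) = a⁻¹*(b*a) := by
    rw [eq_inv_mul_iff_mul_eq, show a*(b*(a*b⁻¹)) = (a*b*a)*b⁻¹ by group, h1]; group
  calc (b*a*c⁻¹*b⁻¹)*a*(b*a*c*b)*(b*a*c⁻¹*b⁻¹)
      = b*(a*(c⁻¹*((b⁻¹*(a*(b*a)))*(c*(b*(b*(a*(c⁻¹*b⁻¹)))))))) := by group
    _ = b*(a*(c⁻¹*((a*b)*(c*(b*(b*(a*(c⁻¹*b⁻¹)))))))) := by rw [d1]
    _ = b*(a*((c⁻¹*a)*(b*(c*(b*(b*(a*(c⁻¹*b⁻¹)))))))) := by group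
    _ = b*(a*((a*c⁻¹)*(b*(c*(b*(b*(a*(c⁻¹*b⁻¹)))))))) := by rw [d2]
    _ = b*(a*(a*((c⁻¹*(b*(c*b)))*(b*(a*(c⁻¹*b⁻¹)))))) := by group
    _ = b*(a*(a*((b*c)*(b*(a*(c⁻¹*b⁻¹)))))) := by rw [d3]
    _ = b*(a*(a*(b*((c*(b*c⁻¹))*(a*b⁻¹))))) := by
          rw [show b*(a*(a*((b*c)*(b*(a*(c⁻¹*b⁻¹)))))) =
              b*(a*(a*(b*((c*(b*(a*c⁻¹)))*b⁻¹)))) by group, ← d2]; group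
    _ = b*(a*(a*(b*((b⁻¹*(c*b))*(a*b⁻¹))))) := by rw [d4]
    _ = b*(a*(a*(c*(b*(a*b⁻¹))))) := by group
    _ = b*(a*(a*(c*(a⁻¹*(b*a))))) := by rw [d5]
    _ = b*(a*(a*((c*a⁻¹)*(b*a)))) := by group
    _ = b*(a*(a*((a⁻¹*c)*(b*a)))) := by
          rw [show (c:G)*a⁻¹ = a⁻¹*c by rw [show (c:G)*a⁻¹ = a⁻¹*(a*c)*a⁻¹ by group, h3]; group]
    _ = (b*a*c*b)*a := by group

lemma braid_comm {m : ℕ} (i j : Fin m) (h : (i : ℕ) + 1 < (j : ℕ)) :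
    (PresentedGroup.of i : BraidGroup m) * PresentedGroup.of j =
      PresentedGroup.of j * PresentedGroup.of i := by
  have h0 : PresentedGroup.mk (braidRels m)
      (FreeGroup.of i * FreeGroup.of j * (FreeGroup.of i)⁻¹ * (FreeGroup.of j)⁻¹) = 1 :=
    rel_one (Or.inl ⟨i, j, h, rfl⟩)
  simp only [map_mul, map_inv] at h0
  have h2 : (PresentedGroup.of i : BraidGroup m) * PresentedGroup.of j =
      (PresentedGroup.mk (braidRels m) (FreeGroup.of i) * PresentedGroup.mk (braidRels m) (FreeGroup.of j) *
        (PresentedGroup.mk (braidRels m) (FreeGroup.of i))⁻¹ * (PresentedGroup.mk (braidRels m) (FreeGroup.of j))⁻¹) *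
      (PresentedGroup.of j * PresentedGroup.of i) := by
    show _ = (PresentedGroup.of i * PresentedGroup.of j * (PresentedGroup.of i)⁻¹ *
      (PresentedGroup.of j)⁻¹ : BraidGroup m) * _
    exact ((fun x y => by group) : ∀ x y : PresentedGroup (braidRels m), x * y = (x * y * x⁻¹ * y⁻¹) * (y * x)) _ _
  rw [h2, h0, one_mul]

lemma braid_braid {m : ℕ} (i j : Fin m) (h : (i : ℕ) + 1 = (j : ℕ)) :
    (PresentedGroup.of i : BraidGroup m) * PresentedGroup.of j * PresentedGroup.of i =
      PresentedGroup.of j * PresentedGroup.of i * PresentedGroup.of j := by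
  have h0 : PresentedGroup.mk (braidRels m)
      (FreeGroup.of i * FreeGroup.of j * FreeGroup.of i *
        (FreeGroup.of j * FreeGroup.of i * FreeGroup.of j)⁻¹) = 1 :=
    rel_one (Or.inr ⟨i, j, h, rfl⟩)
  simp only [map_mul, map_inv] at h0
  have h2 : (PresentedGroup.of i : BraidGroup m) * PresentedGroup.of j * PresentedGroup.of i =
      (PresentedGroup.mk (braidRels m) (FreeGroup.of i) * PresentedGroup.mk (braidRels m) (FreeGroup.of j) *
        PresentedGroup.mk (braidRels m) (FreeGroup.of i) *
        (PresentedGroup.mk (braidRels m) (FreeGroup.of j) * PresentedGroup.mk (braidRels m) (FreeGroup.of i) *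
          PresentedGroup.mk (braidRels m) (FreeGroup.of j))⁻¹) *
      (PresentedGroup.of j * PresentedGroup.of i * PresentedGroup.of j) := by
    show _ = (PresentedGroup.of i * PresentedGroup.of j * PresentedGroup.of i *
      (PresentedGroup.of j * PresentedGroup.of i * PresentedGroup.of j)⁻¹ : BraidGroup m) * _
    exact ((fun x y => by group) : ∀ x y : PresentedGroup (braidRels m), x * y * x = (x * y * x * (y * x * y)⁻¹) * (y * x * y)) _ _
  rw [h2, h0, one_mul]

theorem stmt14 (n : ℕ) (hn : 2 ≤ n) :
    ∀ i : ℕ, 1 ≤ i → i < n →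
      (bp i : BraidGroup (2 * n - 1)) * bt i * bs i * bp i = bs i * bt i := by
  intro i hi1 hi2
  have hA : 2 * i - 1 - 1 < 2 * n - 1 := by omega
  have hB : 2 * i - 1 < 2 * n - 1 := by omega
  have hC : 2 * i + 1 - 1 < 2 * n - 1 := by omega
  set A : Fin (2 * n - 1) := ⟨2 * i - 1 - 1, hA⟩
  set B : Fin (2 * n - 1) := ⟨2 * i - 1, hB⟩
  set C : Fin (2 * n - 1) := ⟨2 * i + 1 - 1, hC⟩
  have eB : (bσ (2 * i) : BraidGroup (2 * n - 1)) = PresentedGroup.of B := dif_pos hB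
  have eA : (bσ (2 * i - 1) : BraidGroup (2 * n - 1)) = PresentedGroup.of A := dif_pos hA
  have eC : (bσ (2 * i + 1) : BraidGroup (2 * n - 1)) = PresentedGroup.of C := dif_pos hC
  simp only [bp, bs, bt, eA, eB, eC]
  exact key _ _ _ (braid_braid A B (by simp [A, B]; omega))
    (braid_braid B C (by simp [B, C]; omega))
    (braid_comm A C (by simp [A, C]; omega))
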